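/- Let C be a Boolean circuit with input variables x₁, …, x_n and gates g₁, …, g_m (g₁ the output gate), let v be a truth assignment to the inputs, and let TA_{C,v} be the associated threshold automaton. Then the location ℓ_F is coverable in TA_{C,v} (i.e., there exist an initial configuration σ₀ and a configuration σ with σ₀ →* σ and σ.κ(ℓ_F) > 0) if and only if the circuit C evaluates to 1 under the assignment v. -/

import Mathlib

/-!
Threshold automata (Konnov, Veith, Widder), following
"Complexity of Verification and Synthesis of Threshold Automata".
-/

/-- A threshold guard `x ⋈ a₀ + a₁·p₁ + … + a_{|Π|}·p_{|Π|}` over shared variables `V` and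
parameters `P`.  `isRise = true` means a *rise* guard `x ≥ …`, and `isRise = false` means a
*fall* guard `x < …`. -/
structure TGuard (V P : Type) where
  var : V
  isRise : Bool
  a0 : ℚ
  coef : P → ℚ

/-- A configuration `σ = (κ, g, p)`: numbers of processes in each location, values of the
shared variables, and values of the parameters. -/
structure Config (L V P : Type) where
  κ : L → ℕ
  g : V → ℕ
  p : P → ℕ

/-- A rule of a threshold automaton: source and target locations, a guard that is a
(finite) conjunction of threshold guards, and an update `V → {0,1}`. -/
structure TRule (L V P : Type) where
  src : L
  dst : L
  guard : List (TGuard V P)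
  upd : V → ℕ
  upd_le_one : ∀ v, upd v ≤ 1

/-- A threshold automaton `(L, I, Γ, R)` together with its environment `(Π, RC, N)`.
`L`, `V`, `P` are the types of locations, shared variables and parameters, and `R` is the
index type of rules. -/
structure TA (L V P R : Type) where
  initial : Set L
  initial_nonempty : initial.Nonempty
  rc : Set (P → ℕ)
  N : (P → ℕ) → ℕ
  rule : R → TRule L V P

variable {L V P R : Type}

/-- Satisfaction of a threshold guard by values `g` of the shared variables and `p` of the
parameters. -/
def TGuard.holds [Fintype P] (φ : TGuard V P) (g : V → ℕ) (p : P → ℕ) : Prop :=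
  if φ.isRise then φ.a0 + ∑ i : P, φ.coef i * (p i : ℚ) ≤ (g φ.var : ℚ)
  else (g φ.var : ℚ) < φ.a0 + ∑ i : P, φ.coef i * (p i : ℚ)

/-- A configuration enables a rule. -/
def TRule.enabledAt [Fintype P] (r : TRule L V P) (σ : Config L V P) : Prop :=
  0 < σ.κ r.src ∧ ∀ φ ∈ r.guard, φ.holds σ.g σ.p

/-- The result of firing a rule at a configuration. -/
def TRule.fire [DecidableEq L] (r : TRule L V P) (σ : Config L V P) : Config L V P where
  κ := fun ℓ => σ.κ ℓ + (if ℓ = r.dst then 1 else 0) - (if ℓ = r.src then 1 else 0)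
  g := fun v => σ.g v + r.upd v
  p := σ.p

namespace TA

variable [Fintype P] [DecidableEq L]

/-- `σ` is a configuration of `ta`: the parameters satisfy the resilience condition and the
total number of processes is `N(p)`. -/
def validConfig [Fintype L] (ta : TA L V P R) (σ : Config L V P) : Prop :=
  σ.p ∈ ta.rc ∧ ∑ ℓ : L, σ.κ ℓ = ta.N σ.p

/-- Initial configurations. -/
def isInitial [Fintype L] (ta : TA L V P R) (σ : Config L V P) : Prop :=
  ta.validConfig σ ∧ (∀ ℓ, ℓ ∉ ta.initial → σ.κ ℓ = 0) ∧ ∀ v, σ.g v = 0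

/-- A schedule (finite sequence of rules) is applicable to a configuration. -/
def applicable (ta : TA L V P R) : Config L V P → List R → Prop
  | _, [] => True
  | σ, r :: τ => (ta.rule r).enabledAt σ ∧ ta.applicable ((ta.rule r).fire σ) τ

/-- The configuration `τ(σ)` resulting from applying a schedule. -/
def apply (ta : TA L V P R) : Config L V P → List R → Config L V P
  | σ, [] => σ
  | σ, r :: τ => ta.apply ((ta.rule r).fire σ) τ

/-- The configurations visited by the path from `σ` along `τ` (including both endpoints). -/
def visited (ta : TA L V P R) : Config L V P → List R → List (Config L V P)
  | σ, [] => [σ]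
  | σ, r :: τ => σ :: ta.visited ((ta.rule r).fire σ) τ

/-- Reachability `σ →* σ'`. -/
def reaches (ta : TA L V P R) (σ σ' : Config L V P) : Prop :=
  ∃ τ : List R, ta.applicable σ τ ∧ ta.apply σ τ = σ'

/-- The set of all threshold guards occurring in rules of the automaton. -/
def guards (ta : TA L V P R) : Set (TGuard V P) :=
  {φ | ∃ r : R, φ ∈ (ta.rule r).guard}

/-- The context `ω(σ)`: rise guards of `ta` that are true in `σ` together with fall guards
of `ta` that are false in `σ`. -/
def context (ta : TA L V P R) (σ : Config L V P) : Set (TGuard V P) :=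
  {φ | φ ∈ ta.guards ∧ if φ.isRise then φ.holds σ.g σ.p else ¬ φ.holds σ.g σ.p}

/-- A schedule applicable at `σ` is steady if all configurations visited by the
corresponding path have the same context. -/
def steady (ta : TA L V P R) (σ : Config L V P) (τ : List R) : Prop :=
  ∀ σ' ∈ ta.visited σ τ, ta.context σ' = ta.context σ

end TA

/-! ### The threshold automaton `TA_{C,v}` associated with a Boolean circuit -/

/-- A gate of a Boolean circuit with `n` inputs and `m` gates: a binary `∧`- or `∨`-gate
or a unary `¬`-gate, whose inputs are input variables (`Sum.inl`) or gates (`Sum.inr`). -/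
inductive GateDef (n m : ℕ) where
  | and (s₁ s₂ : Fin n ⊕ Fin m)
  | or (s₁ s₂ : Fin n ⊕ Fin m)
  | not (s : Fin n ⊕ Fin m)
deriving DecidableEq

/-- Evaluation of the circuit `C` under the input assignment `v`: `SigVal C v s b` means
that the signal `s` (input variable or gate) takes the value `b`. -/
inductive SigVal {n m : ℕ} (C : Fin m → GateDef n m) (v : Fin n → Bool) :
    (Fin n ⊕ Fin m) → Bool → Prop
  | input (i : Fin n) : SigVal C v (Sum.inl i) (v i)
  | gand (j : Fin m) (s₁ s₂ : Fin n ⊕ Fin m) (b₁ b₂ : Bool) (h : C j = GateDef.and s₁ s₂)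
      (h₁ : SigVal C v s₁ b₁) (h₂ : SigVal C v s₂ b₂) : SigVal C v (Sum.inr j) (b₁ && b₂)
  | gor (j : Fin m) (s₁ s₂ : Fin n ⊕ Fin m) (b₁ b₂ : Bool) (h : C j = GateDef.or s₁ s₂)
      (h₁ : SigVal C v s₁ b₁) (h₂ : SigVal C v s₂ b₂) : SigVal C v (Sum.inr j) (b₁ || b₂)
  | gnot (j : Fin m) (s : Fin n ⊕ Fin m) (b : Bool) (h : C j = GateDef.not s)
      (h₁ : SigVal C v s b) : SigVal C v (Sum.inr j) (!b)

/-- Locations: `ℓ₀, …, ℓ_n`, the gate locations `ℓ_{g_j}` and `ℓ'_{g_j}`, and `ℓ_F`. -/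
abbrev CLoc (n m : ℕ) := Fin (n + 1) ⊕ (Fin m ⊕ Fin m) ⊕ Unit

def cInput {n m : ℕ} (i : Fin (n + 1)) : CLoc n m := Sum.inl i
def cGate {n m : ℕ} (j : Fin m) : CLoc n m := Sum.inr (Sum.inl (Sum.inl j))
def cGate' {n m : ℕ} (j : Fin m) : CLoc n m := Sum.inr (Sum.inl (Sum.inr j))
def cFin {n m : ℕ} : CLoc n m := Sum.inr (Sum.inr ())

/-- Shared variables: `x_i^b` and `g_j^b`. -/
abbrev CVar (n m : ℕ) := (Fin n × Bool) ⊕ (Fin m × Bool)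

/-- The shared variable `s^b` associated with signal `s` and bit `b`. -/
def sigVar {n m : ℕ} (s : Fin n ⊕ Fin m) (b : Bool) : CVar n m :=
  match s with
  | Sum.inl i => Sum.inl (i, b)
  | Sum.inr j => Sum.inr (j, b)

/-- Rules: the input chain `ℓ_{i-1} → ℓ_i`, the gate rules `ℓ_{g_j} → ℓ'_{g_j}` (indexed
by the gate and a pair of bits) and the final rule `ℓ'_{g_1} → ℓ_F`. -/
abbrev CRule (n m : ℕ) := Fin n ⊕ (Fin m × Bool × Bool) ⊕ Unit

/-- A guard with constant threshold (all parameter coefficients `0`). -/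
def constGuard {V P : Type} (isRise : Bool) (x : V) (a : ℚ) : TGuard V P :=
  ⟨x, isRise, a, fun _ => 0⟩

/-- The update incrementing exactly the shared variable `x`. -/
def unitUpd {V : Type} [DecidableEq V] (x : V) : V → ℕ := fun v => if v = x then 1 else 0

theorem unitUpd_le_one {V : Type} [DecidableEq V] (x v : V) : unitUpd x v ≤ 1 := by
  unfold unitUpd; split <;> omega

/-- The rules of `TA_{C,v}` (here `hm : 0 < m` and the output gate is gate `0`). -/
def circRule {n m : ℕ} (hm : 0 < m) (C : Fin m → GateDef n m) (v : Fin n → Bool) :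
    CRule n m → TRule (CLoc n m) (CVar n m) Unit
  | Sum.inl i =>
      ⟨cInput i.castSucc, cInput i.succ, [], unitUpd (Sum.inl (i, v i)),
        fun x => unitUpd_le_one _ x⟩
  | Sum.inr (Sum.inl (j, b, b')) =>
      match C j with
      | GateDef.and s₁ s₂ =>
          ⟨cGate j, cGate' j,
            [constGuard true (sigVar s₁ b) 1, constGuard true (sigVar s₂ b') 1],
            unitUpd (Sum.inr (j, b && b')), fun x => unitUpd_le_one _ x⟩
      | GateDef.or s₁ s₂ =>
          ⟨cGate j, cGate' j,
            [constGuard true (sigVar s₁ b) 1, constGuard true (sigVar s₂ b') 1],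
            unitUpd (Sum.inr (j, b || b')), fun x => unitUpd_le_one _ x⟩
      | GateDef.not s =>
          ⟨cGate j, cGate' j, [constGuard true (sigVar s b) 1],
            unitUpd (Sum.inr (j, !b)), fun x => unitUpd_le_one _ x⟩
  | Sum.inr (Sum.inr _) =>
      ⟨cGate' ⟨0, hm⟩, cFin, [constGuard true (Sum.inr (⟨0, hm⟩, true)) 1],
        fun _ => 0, fun _ => Nat.zero_le 1⟩

/-- The threshold automaton `TA_{C,v}`: one parameter `k`, trivial resilience condition,
`N(k) = k`; the initial locations are `ℓ₀` and the gate locations `ℓ_{g_j}`. -/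
def circTA {n m : ℕ} (hm : 0 < m) (C : Fin m → GateDef n m) (v : Fin n → Bool) :
    TA (CLoc n m) (CVar n m) Unit (CRule n m) where
  initial := {ℓ | ℓ = cInput 0 ∨ ∃ j : Fin m, ℓ = cGate j}
  initial_nonempty := ⟨cInput 0, Or.inl rfl⟩
  rc := Set.univ
  N := fun p => p ()
  rule := circRule hm C v

/-!
Soundness: a rule for gate `g` only fires when the variables `s^b` it reads are positive, so
by induction every positive variable `s^b` records the true value `b` of `s`; and `ℓ_F` is
entered only through the rule guarded by `g₁^1 ≥ 1`. Completeness: start with one process at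
`ℓ₀`, which sets every `x_i^{v_i}`, and `K` processes in each `ℓ_{g_j}`, where `K` is the size
of an evaluation tree (a `SigVal` derivation) of `g₁`; the tree is then evaluated bottom-up,
one process per node.
-/

namespace TRule

variable {L V P : Type} [DecidableEq L] (r : TRule L V P) (σ : Config L V P) (ℓ : L)

@[simp]
theorem fire_g (x : V) : (r.fire σ).g x = σ.g x + r.upd x := rfl

theorem fire_κ_le_of_ne_dst (h : ℓ ≠ r.dst) : (r.fire σ).κ ℓ ≤ σ.κ ℓ := by
  simp only [fire, if_neg h]
  omega

theorem κ_le_fire_κ_of_ne_src (h : ℓ ≠ r.src) : σ.κ ℓ ≤ (r.fire σ).κ ℓ := by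
  simp only [fire, if_neg h]
  omega

theorem κ_le_fire_κ_add_one : σ.κ ℓ ≤ (r.fire σ).κ ℓ + 1 := by
  simp only [fire]
  split_ifs <;> omega

theorem fire_κ_dst_pos (h : r.src ≠ r.dst) : 0 < (r.fire σ).κ r.dst := by
  simp [fire, h.symm]

end TRule

namespace TA

variable {L V P R : Type} [Fintype P] [DecidableEq L] (ta : TA L V P R)

def Step (σ σ' : Config L V P) : Prop :=
  ∃ r, (ta.rule r).enabledAt σ ∧ (ta.rule r).fire σ = σ'

theorem reaches_iff_reflTransGen {σ σ' : Config L V P} :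
    ta.reaches σ σ' ↔ Relation.ReflTransGen ta.Step σ σ' := by
  constructor
  · rintro ⟨τ, happ, rfl⟩
    induction τ generalizing σ with
    | nil => exact .refl
    | cons r τ ih => exact .head ⟨r, happ.1, rfl⟩ (ih happ.2)
  · intro h
    induction h using Relation.ReflTransGen.head_induction_on with
    | refl => exact ⟨[], trivial, rfl⟩
    | head hstep _ ih =>
      obtain ⟨r, hen, rfl⟩ := hstep
      obtain ⟨τ, happ, hτ⟩ := ih
      exact ⟨r :: τ, ⟨hen, happ⟩, hτ⟩

variable {ta}

theorem invariant_of_reflTransGen {I : Config L V P → Prop}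
    (hstep : ∀ r σ, (ta.rule r).enabledAt σ → I σ → I ((ta.rule r).fire σ))
    {σ σ' : Config L V P} (h : Relation.ReflTransGen ta.Step σ σ') (hσ : I σ) : I σ' := by
  induction h with
  | refl => exact hσ
  | tail _ hs ih =>
    obtain ⟨r, hen, rfl⟩ := hs
    exact hstep r _ hen ih

theorem g_le_of_reflTransGen {σ σ' : Config L V P}
    (h : Relation.ReflTransGen ta.Step σ σ') (x : V) : σ.g x ≤ σ'.g x :=
  invariant_of_reflTransGen (I := fun τ => σ.g x ≤ τ.g x)
    (fun _ _ _ hle => hle.trans (by simp)) h le_rfl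

end TA

theorem TGuard.holds_constGuard_one {V P : Type} [Fintype P] (x : V) (g : V → ℕ)
    (p : P → ℕ) : (constGuard true x 1 : TGuard V P).holds g p ↔ 0 < g x := by
  simp [TGuard.holds, constGuard, Nat.one_le_iff_ne_zero, Nat.pos_iff_ne_zero]

theorem unitUpd_pos_iff {V : Type} [DecidableEq V] {x y : V} : 0 < unitUpd x y ↔ y = x := by
  unfold unitUpd
  split_ifs <;> simp_all

section Circuit

variable {n m : ℕ} (hm : 0 < m) (C : Fin m → GateDef n m) (v : Fin n → Bool)

def SoundVar : CVar n m → Prop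
  | Sum.inl (i, b) => SigVal C v (Sum.inl i) b
  | Sum.inr (j, b) => SigVal C v (Sum.inr j) b

theorem soundVar_sigVar (s : Fin n ⊕ Fin m) (b : Bool) :
    SoundVar C v (sigVar s b) ↔ SigVal C v s b := by
  cases s <;> rfl

theorem circRule_gate_src (j : Fin m) (b b' : Bool) :
    (circRule hm C v (Sum.inr (Sum.inl (j, b, b')))).src = cGate j := by
  simp only [circRule]
  split <;> rfl

theorem circRule_gate_dst (j : Fin m) (b b' : Bool) :
    (circRule hm C v (Sum.inr (Sum.inl (j, b, b')))).dst = cGate' j := by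
  simp only [circRule]
  split <;> rfl

theorem circRule_upd_sound {r : CRule n m} {σ : Config (CLoc n m) (CVar n m) Unit}
    (hen : (circRule hm C v r).enabledAt σ) (hσ : ∀ x, 0 < σ.g x → SoundVar C v x)
    {x : CVar n m} (hx : 0 < (circRule hm C v r).upd x) : SoundVar C v x := by
  have guard_sound : ∀ s b, constGuard true (sigVar s b) 1 ∈ (circRule hm C v r).guard →
      SigVal C v s b := fun s b hφ =>
    (soundVar_sigVar C v s b).1 (hσ _ ((TGuard.holds_constGuard_one _ _ _).1 (hen.2 _ hφ)))
  rcases r with i | ⟨j, b, b'⟩ | u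
  · obtain rfl := unitUpd_pos_iff.1 hx
    exact SigVal.input i
  · rcases hC : C j with ⟨s₁, s₂⟩ | ⟨s₁, s₂⟩ | s <;>
      simp only [circRule, hC] at hx guard_sound <;>
      obtain rfl := unitUpd_pos_iff.1 hx
    · exact .gand j s₁ s₂ b b' hC (guard_sound _ _ (by simp)) (guard_sound _ _ (by simp))
    · exact .gor j s₁ s₂ b b' hC (guard_sound _ _ (by simp)) (guard_sound _ _ (by simp))
    · exact .gnot j s b hC (guard_sound _ _ (by simp))
  · simp [circRule] at hx

theorem circRule_eq_final_of_dst_eq_cFin {r : CRule n m}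
    (h : (circRule hm C v r).dst = cFin) : r = Sum.inr (Sum.inr ()) := by
  rcases r with i | ⟨j, b, b'⟩ | u
  · simp [circRule, cInput, cFin] at h
  · simp [circRule_gate_dst, cGate', cFin] at h
  · rfl

def CircInv (σ : Config (CLoc n m) (CVar n m) Unit) : Prop :=
  (∀ x, 0 < σ.g x → SoundVar C v x) ∧ (0 < σ.κ cFin → SigVal C v (Sum.inr ⟨0, hm⟩) true)

theorem circInv_fire {r : CRule n m} {σ : Config (CLoc n m) (CVar n m) Unit}
    (hen : (circRule hm C v r).enabledAt σ) (hI : CircInv hm C v σ) :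
    CircInv hm C v ((circRule hm C v r).fire σ) := by
  obtain ⟨hg, hF⟩ := hI
  refine ⟨fun x hx => ?_, fun hx => ?_⟩
  · rw [TRule.fire_g] at hx
    rcases Nat.eq_zero_or_pos (σ.g x) with h0 | hpos
    · exact circRule_upd_sound hm C v hen hg (by omega)
    · exact hg x hpos
  · by_cases hdst : cFin = (circRule hm C v r).dst
    · obtain rfl := circRule_eq_final_of_dst_eq_cFin hm C v hdst.symm
      exact hg _ ((TGuard.holds_constGuard_one _ _ _).1 (hen.2 _ (List.mem_singleton_self _)))
    · exact hF (hx.trans_le (TRule.fire_κ_le_of_ne_dst _ _ _ hdst))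

theorem sigVal_of_coverable {σ₀ σ : Config (CLoc n m) (CVar n m) Unit}
    (hinit : (circTA hm C v).isInitial σ₀) (hreach : (circTA hm C v).reaches σ₀ σ)
    (hF : 0 < σ.κ cFin) : SigVal C v (Sum.inr ⟨0, hm⟩) true := by
  have hI₀ : CircInv hm C v σ₀ := by
    refine ⟨fun x hx => by simp [hinit.2.2 x] at hx, fun hx => ?_⟩
    rw [hinit.2.1 cFin (by simp [circTA, cFin, cInput, cGate])] at hx
    exact (lt_irrefl 0 hx).elim
  exact (TA.invariant_of_reflTransGen (fun _ _ => circInv_fire hm C v)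
    ((TA.reaches_iff_reflTransGen _).1 hreach) hI₀).2 hF

structure ReachesWithin (K : ℕ) (σ σ' : Config (CLoc n m) (CVar n m) Unit) : Prop where
  reaches : Relation.ReflTransGen (circTA hm C v).Step σ σ'
  gate_le : ∀ j, σ.κ (cGate j) ≤ σ'.κ (cGate j) + K
  gate'_le : ∀ j, σ.κ (cGate' j) ≤ σ'.κ (cGate' j)

variable {hm C v}

theorem ReachesWithin.refl (σ : Config (CLoc n m) (CVar n m) Unit) :
    ReachesWithin hm C v 0 σ σ :=
  ⟨.refl, fun _ => le_rfl, fun _ => le_rfl⟩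

theorem ReachesWithin.trans {K₁ K₂ : ℕ} {σ₁ σ₂ σ₃ : Config (CLoc n m) (CVar n m) Unit}
    (h₁₂ : ReachesWithin hm C v K₁ σ₁ σ₂) (h₂₃ : ReachesWithin hm C v K₂ σ₂ σ₃) :
    ReachesWithin hm C v (K₁ + K₂) σ₁ σ₃ where
  reaches := h₁₂.reaches.trans h₂₃.reaches
  gate_le j := by have := h₁₂.gate_le j; have := h₂₃.gate_le j; omega
  gate'_le j := (h₁₂.gate'_le j).trans (h₂₃.gate'_le j)

theorem reachesWithin_fire_gate {j : Fin m} {b b' : Bool} {σ : Config (CLoc n m) (CVar n m) Unit}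
    (hen : (circRule hm C v (Sum.inr (Sum.inl (j, b, b')))).enabledAt σ) :
    ReachesWithin hm C v 1 σ ((circRule hm C v (Sum.inr (Sum.inl (j, b, b')))).fire σ) where
  reaches := .single ⟨_, hen, rfl⟩
  gate_le j' := TRule.κ_le_fire_κ_add_one _ _ _
  gate'_le j' := TRule.κ_le_fire_κ_of_ne_src _ _ _ (by simp [circRule_gate_src, cGate, cGate'])

variable (hm C v)

def InputsSet (σ : Config (CLoc n m) (CVar n m) Unit) : Prop :=
  ∀ i, 0 < σ.g (Sum.inl (i, v i))

def Evaluable (K : ℕ) (s : Fin n ⊕ Fin m) (b : Bool) : Prop :=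
  ∀ σ, InputsSet v σ → (∀ j, K ≤ σ.κ (cGate j)) →
    ∃ σ', ReachesWithin hm C v K σ σ' ∧ 0 < σ'.g (sigVar s b) ∧
      ∀ j, s = Sum.inr j → 0 < σ'.κ (cGate' j)

theorem evaluable_input (i : Fin n) : Evaluable hm C v 0 (Sum.inl i) (v i) :=
  fun σ hin _ => ⟨σ, .refl σ, hin i, by simp⟩

theorem evaluable_gate {j : Fin m} {b₁ b₂ bo : Bool} {s₁ s₂ : Fin n ⊕ Fin m} {K₁ K₂ : ℕ}
    (hupd : (circRule hm C v (Sum.inr (Sum.inl (j, b₁, b₂)))).upd = unitUpd (Sum.inr (j, bo)))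
    (hguard : ∀ φ ∈ (circRule hm C v (Sum.inr (Sum.inl (j, b₁, b₂)))).guard,
      φ = constGuard true (sigVar s₁ b₁) 1 ∨ φ = constGuard true (sigVar s₂ b₂) 1)
    (h₁ : Evaluable hm C v K₁ s₁ b₁) (h₂ : Evaluable hm C v K₂ s₂ b₂) :
    Evaluable hm C v (K₁ + K₂ + 1) (Sum.inr j) bo := by
  intro σ hin hK
  obtain ⟨σ₁, hW₁, hg₁, -⟩ := h₁ σ hin fun j => (hK j).trans' (by omega)
  obtain ⟨σ₂, hW₂, hg₂, -⟩ := h₂ σ₁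
    (fun i => (hin i).trans_le (TA.g_le_of_reflTransGen hW₁.reaches _))
    (fun j => by have := hK j; have := hW₁.gate_le j; omega)
  have hen : (circRule hm C v (Sum.inr (Sum.inl (j, b₁, b₂)))).enabledAt σ₂ := by
    refine ⟨?_, fun φ hφ => ?_⟩
    · rw [circRule_gate_src]
      have := hK j; have := hW₁.gate_le j; have := hW₂.gate_le j
      omega
    · rcases hguard φ hφ with rfl | rfl <;> rw [TGuard.holds_constGuard_one]
      exacts [hg₁.trans_le (TA.g_le_of_reflTransGen hW₂.reaches _), hg₂]
  refine ⟨_, (hW₁.trans hW₂).trans (reachesWithin_fire_gate hen), ?_, ?_⟩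
  · simp [hupd, unitUpd, sigVar]
  · rintro _ ⟨⟩
    rw [← circRule_gate_dst hm C v j b₁ b₂]
    exact TRule.fire_κ_dst_pos _ _ (by simp [circRule_gate_src, circRule_gate_dst, cGate, cGate'])

theorem exists_evaluable {s : Fin n ⊕ Fin m} {b : Bool} (h : SigVal C v s b) :
    ∃ K, Evaluable hm C v K s b := by
  induction h with
  | input i => exact ⟨0, evaluable_input hm C v i⟩
  | gand j s₁ s₂ b₁ b₂ hC _ _ ih₁ ih₂ | gor j s₁ s₂ b₁ b₂ hC _ _ ih₁ ih₂ =>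
    obtain ⟨K₁, ih₁⟩ := ih₁
    obtain ⟨K₂, ih₂⟩ := ih₂
    exact ⟨_, evaluable_gate hm C v (by simp only [circRule, hC]) (by simp [circRule, hC])
      ih₁ ih₂⟩
  | gnot j s b hC _ ih =>
    obtain ⟨K, ih⟩ := ih
    exact ⟨_, evaluable_gate hm C v (b₂ := b) (by simp only [circRule, hC])
      (by simp [circRule, hC]) ih ih⟩

theorem exists_inputsSet {σ : Config (CLoc n m) (CVar n m) Unit} (h : 0 < σ.κ (cInput 0)) :
    ∃ σ', Relation.ReflTransGen (circTA hm C v).Step σ σ' ∧ InputsSet v σ' ∧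
      ∀ j, σ.κ (cGate j) ≤ σ'.κ (cGate j) := by
  have walk : ∀ k (hk : k ≤ n), ∃ σ', Relation.ReflTransGen (circTA hm C v).Step σ σ' ∧
      0 < σ'.κ (cInput ⟨k, by omega⟩) ∧ (∀ i : Fin n, i.1 < k → 0 < σ'.g (Sum.inl (i, v i))) ∧
      ∀ j, σ.κ (cGate j) ≤ σ'.κ (cGate j) := by
    intro k hk
    induction k with
    | zero => exact ⟨σ, .refl, h, fun i hi => absurd hi (by omega), fun _ => le_rfl⟩
    | succ k ih =>
      obtain ⟨σ', hreach, hpos, hin, hgate⟩ := ih (by omega)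
      let r : CRule n m := Sum.inl ⟨k, by omega⟩
      have hsrc : (circRule hm C v r).src ≠ (circRule hm C v r).dst := by
        simp [r, circRule, cInput, Fin.ext_iff]
      have hgate_src (j : Fin m) : cGate j ≠ (circRule hm C v r).src := by
        simp [r, circRule, cGate, cInput]
      refine ⟨_, hreach.tail ⟨r, ⟨hpos, by simp [r, circTA, circRule]⟩, rfl⟩,
        TRule.fire_κ_dst_pos _ _ hsrc, fun i hi => ?_,
        fun j => (hgate j).trans (TRule.κ_le_fire_κ_of_ne_src _ _ _ (hgate_src j))⟩
      rcases (Nat.lt_succ_iff.1 hi).lt_or_eq with hlt | heq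
      · exact (hin i hlt).trans_le (by simp)
      · obtain ⟨i, hi⟩ := i
        subst heq
        simp [r, circTA, circRule, unitUpd]
  obtain ⟨σ', hreach, -, hin, hgate⟩ := walk n le_rfl
  exact ⟨σ', hreach, fun i => hin i i.2, hgate⟩

def startConfig (K : ℕ) : Config (CLoc n m) (CVar n m) Unit where
  κ := Sum.elim (Pi.single 0 1) (Sum.elim (Sum.elim (fun _ => K) 0) 0)
  g := 0
  p := fun _ => 1 + m * K

theorem isInitial_startConfig (K : ℕ) : (circTA hm C v).isInitial (startConfig K) := by
  refine ⟨⟨trivial, ?_⟩, ?_, fun _ => rfl⟩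
  · simp [startConfig, circTA, Fintype.sum_sum_type]
  · rintro ((i | (j | j) | u)) hℓ
    · have hi : i ≠ 0 := fun h => hℓ (Or.inl (by simp [cInput, h]))
      simp [startConfig, hi]
    · exact absurd (Or.inr ⟨j, rfl⟩) hℓ
    · rfl
    · rfl

theorem exists_step_cFin {σ : Config (CLoc n m) (CVar n m) Unit}
    (h₁ : 0 < σ.κ (cGate' ⟨0, hm⟩)) (h₂ : 0 < σ.g (Sum.inr (⟨0, hm⟩, true))) :
    ∃ σ', (circTA hm C v).Step σ σ' ∧ 0 < σ'.κ cFin :=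
  have hen : ((circTA hm C v).rule (Sum.inr (Sum.inr ()))).enabledAt σ :=
    ⟨h₁, by simpa [circTA, circRule, TGuard.holds_constGuard_one]⟩
  ⟨_, ⟨_, hen, rfl⟩, TRule.fire_κ_dst_pos _ _ (by simp [circTA, circRule, cGate', cFin])⟩

end Circuit

/-- The location `ℓ_F` is coverable in `TA_{C,v}` iff the circuit `C` evaluates to `1`
under the assignment `v` (where gate `g₁` — gate `0` — is the output gate). -/
theorem circuit_value_iff_coverable {n m : ℕ} (hm : 0 < m)
    (C : Fin m → GateDef n m) (v : Fin n → Bool) :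
    (∃ σ₀ σ : Config (CLoc n m) (CVar n m) Unit,
      (circTA hm C v).isInitial σ₀ ∧ (circTA hm C v).reaches σ₀ σ ∧ 0 < σ.κ cFin) ↔
    SigVal C v (Sum.inr ⟨0, hm⟩) true := by
  constructor
  · rintro ⟨σ₀, σ, hinit, hreach, hF⟩
    exact sigVal_of_coverable hm C v hinit hreach hF
  · intro hout
    obtain ⟨K, hK⟩ := exists_evaluable hm C v hout
    obtain ⟨σ₁, hreach₁, hin, hgate⟩ :=
      exists_inputsSet hm C v (σ := startConfig K) (by simp [startConfig, cInput])
    obtain ⟨σ₂, hW, hout₂, hκ₂⟩ :=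
      hK σ₁ hin fun j => (hgate j).trans' (by simp [startConfig, cGate])
    obtain ⟨σ, hstep, hF⟩ := exists_step_cFin hm C v (hκ₂ _ rfl) hout₂
    exact ⟨startConfig K, σ, isInitial_startConfig hm C v K,
      (TA.reaches_iff_reflTransGen _).2 ((hreach₁.trans hW.reaches).tail hstep), hF⟩
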